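/- In the multidimensional elephant random walk with stops, if r = 1/2, then Z_n*/(√n · log n) converges to 0 almost surely as n → ∞. -/

import Mathlib

open MeasureTheory ProbabilityTheory Filter

noncomputable section

/-- The `d × d` cyclic permutation matrix `J_d` with ones on the superdiagonal and in
position `(d, 1)`. -/
def cyclicMatrix (d : ℕ) : Matrix (Fin d) (Fin d) ℝ :=
  Matrix.of fun i j => if (j : ℕ) = ((i : ℕ) + 1) % d then 1 else 0

/-- A matrix is measurable entrywise. -/
instance {m n : Type*} : MeasurableSpace (Matrix m n ℝ) :=
  inferInstanceAs (MeasurableSpace (m → n → ℝ))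

/-- The multidimensional elephant random walk with stops, with memory parameters
`p`, `q`, `r` satisfying `p + (2d-1)q + r = 1`. -/
structure MERWStops {Ω : Type*} [MeasurableSpace Ω] (P : Measure Ω)
    (d : ℕ) (p q r : ℝ) where
  X : ℕ → Ω → EuclideanSpace ℝ (Fin d)
  A : ℕ → Ω → Matrix (Fin d) (Fin d) ℝ
  β : ℕ → Ω → ℕ
  hd : 1 ≤ d
  hp : p ∈ Set.Icc (0 : ℝ) 1
  hq : q ∈ Set.Icc (0 : ℝ) 1
  hr : r ∈ Set.Icc (0 : ℝ) 1
  hpqr : p + (2 * (d : ℝ) - 1) * q + r = 1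
  measX : ∀ n, Measurable (X n)
  measA : ∀ n, Measurable (A n)
  measβ : ∀ n, Measurable (β n)
  /-- `X 1` is uniformly distributed on `{± e_1, …, ± e_d}`. -/
  hX1 : ∀ i : Fin d,
    P {ω | X 1 ω = EuclideanSpace.single i (1 : ℝ)} = ENNReal.ofReal (1 / (2 * (d : ℝ))) ∧
    P {ω | X 1 ω = -EuclideanSpace.single i (1 : ℝ)} = ENNReal.ofReal (1 / (2 * (d : ℝ)))
  /-- The recursion `X (n+1) = A (n+1) * X (β n)`. -/
  hrec : ∀ n, 1 ≤ n → ∀ ω, ∀ i, X (n + 1) ω i = ∑ j, A (n + 1) ω i j * X (β n ω) ω j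
  /-- `β n` is uniformly distributed on `{1, …, n}`. -/
  hβ : ∀ n, 1 ≤ n → ∀ k ∈ Finset.Icc 1 n, P {ω | β n ω = k} = ENNReal.ofReal (1 / (n : ℝ))
  hAI : ∀ n, 1 ≤ n → P {ω | A (n + 1) ω = 1} = ENNReal.ofReal p
  hAnegI : ∀ n, 1 ≤ n → P {ω | A (n + 1) ω = -1} = ENNReal.ofReal q
  hAJ : ∀ n, 1 ≤ n → ∀ i ∈ Finset.Icc 1 (d - 1),
    P {ω | A (n + 1) ω = cyclicMatrix d ^ i} = ENNReal.ofReal q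
  hAnegJ : ∀ n, 1 ≤ n → ∀ i ∈ Finset.Icc 1 (d - 1),
    P {ω | A (n + 1) ω = -(cyclicMatrix d ^ i)} = ENNReal.ofReal q
  hAzero : ∀ n, 1 ≤ n → P {ω | A (n + 1) ω = 0} = ENNReal.ofReal r
  /-- `A (n+1)`, `β n` and `σ(X_1, …, X_n)` are mutually independent. -/
  hindep : ∀ n, 1 ≤ n →
    iIndep
      ![MeasurableSpace.comap (A (n + 1)) inferInstance,
        MeasurableSpace.comap (β n) inferInstance,
        ⨆ k ∈ Finset.Icc 1 n, MeasurableSpace.comap (X k) inferInstance] P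

namespace MERWStops

variable {Ω : Type*} [MeasurableSpace Ω] {P : Measure Ω} {d : ℕ} {p q r : ℝ}

/-- The number of moves up to time `n` : `Z_n* = ∑_{k=1}^n ‖X_k‖²`. -/
def Zstar (W : MERWStops P d p q r) (n : ℕ) (ω : Ω) : ℝ :=
  ∑ k ∈ Finset.Icc 1 n, ‖W.X k ω‖ ^ 2

/-- The σ-field `G_n = σ(X_1, …, X_n)`. -/
def G (W : MERWStops P d p q r) (n : ℕ) : MeasurableSpace Ω :=
  ⨆ k ∈ Finset.Icc 1 n, MeasurableSpace.comap (W.X k) inferInstance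

/-- The normalizing sequence `a_1 = 1`, `a_n = ∏_{k=1}^{n-1} (1 + (1-r)/k)`. -/
def aseq (r : ℝ) (n : ℕ) : ℝ :=
  ∏ k ∈ Finset.Icc 1 (n - 1), (1 + (1 - r) / (k : ℝ))

end MERWStops

/-! The normalized number of moves `M_n = Z*_{n+1} / a_{n+1}` is a nonnegative martingale for
`G_{n+1}`. Indeed every nonzero value `±J_d^i` of `A_{n+1}` is a signed permutation matrix, so
`‖X_{n+1}‖² = 1_{A_{n+1} ≠ 0} ‖X_{β(n)}‖²`, and given `G_n` the step `n + 1` is a move with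
probability `(1 - r) Z*_n / n`; this is exactly what `a_{n+1} = a_n (1 + (1 - r)/n)` compensates.
Hence `M_n` converges almost surely. For `r = 1/2` the bounds `1 + x ≤ eˣ` and `H_n ≤ 1 + log n`
give `a_{n+1} ≤ e^{1/2} √(n + 1)`, so that
`Z*_{n+1} / (√(n+1) log (n+1)) = M_n · a_{n+1} / (√(n+1) log (n+1)) → 0`. -/

open scoped Matrix Topology

section

variable {d : ℕ}

theorem cyclicMatrix_eq_permMatrix : cyclicMatrix d = (finRotate d).permMatrix ℝ := by
  ext i j
  have := i.neZero
  simp [cyclicMatrix, PEquiv.toMatrix_apply, finRotate_apply, Fin.ext_iff, Fin.val_add, eq_comm]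

theorem cyclicMatrix_pow_eq_permMatrix (k : ℕ) :
    cyclicMatrix d ^ k = (finRotate d ^ k).permMatrix ℝ := by
  induction k with
  | zero => simp
  | succ k ih => rw [pow_succ', pow_succ, Matrix.permMatrix_mul, ih, cyclicMatrix_eq_permMatrix]

open Fin.NatCast in
theorem finRotate_pow_apply [NeZero d] (i : Fin d) (k : ℕ) :
    (finRotate d ^ k) i = i + (k : Fin d) := by
  induction k with
  | zero => simp
  | succ k ih => simp [pow_succ', ih, finRotate_apply, add_assoc]

theorem cyclicMatrix_pow_val_apply_zero [NeZero d] (i j : Fin d) :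
    (cyclicMatrix d ^ (i : ℕ)) 0 j = if i = j then 1 else 0 := by
  simp [cyclicMatrix_pow_eq_permMatrix, PEquiv.toMatrix_apply, finRotate_pow_apply]

theorem norm_cyclicMatrix_pow_mulVec (k : ℕ) (v : EuclideanSpace ℝ (Fin d)) :
    ‖WithLp.toLp 2 (cyclicMatrix d ^ k *ᵥ v.ofLp)‖ = ‖v‖ := by
  simp only [EuclideanSpace.norm_eq, cyclicMatrix_pow_eq_permMatrix, Matrix.permMatrix_mulVec]
  congr 1
  exact Equiv.sum_comp (finRotate d ^ k) (fun i ↦ ‖v i‖ ^ 2)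

/-- The `2d + 1` values `0`, `J_d^i`, `-J_d^i` (`0 ≤ i < d`) of the matrices `A_{n+1}`. -/
def stepMatrix (d : ℕ) : Option (Fin d ⊕ Fin d) → Matrix (Fin d) (Fin d) ℝ
  | none => 0
  | some (.inl i) => cyclicMatrix d ^ (i : ℕ)
  | some (.inr i) => -cyclicMatrix d ^ (i : ℕ)

theorem stepMatrix_injective [NeZero d] : Function.Injective (stepMatrix d) := by
  rintro (_ | i | i) (_ | k | k) h
  all_goals
    have row := fun j => congr_fun (congr_fun h 0) j
    simp only [stepMatrix, Matrix.zero_apply, Matrix.neg_apply,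
      cyclicMatrix_pow_val_apply_zero] at row
    simp only [Option.some.injEq, Sum.inl.injEq, Sum.inr.injEq, reduceCtorEq]
  all_goals first
    | rfl
    | simpa using row i
    | simpa using row k
    | (have := row i; rw [if_pos rfl] at this; split_ifs at this <;> norm_num at this)

theorem norm_stepMatrix_some_mulVec (s : Fin d ⊕ Fin d) (v : EuclideanSpace ℝ (Fin d)) :
    ‖WithLp.toLp 2 (stepMatrix d (some s) *ᵥ v.ofLp)‖ = ‖v‖ := by
  rcases s with i | i
  · exact norm_cyclicMatrix_pow_mulVec i v
  · rw [stepMatrix, Matrix.neg_mulVec, WithLp.toLp_neg, norm_neg]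
    exact norm_cyclicMatrix_pow_mulVec i v

/-- The `2d` values `±e_i` of `X_1`. -/
def signedBasisVector (d : ℕ) : Fin d ⊕ Fin d → EuclideanSpace ℝ (Fin d) :=
  Sum.elim (fun i => EuclideanSpace.single i 1) (fun i => -EuclideanSpace.single i 1)

theorem signedBasisVector_injective : Function.Injective (signedBasisVector d) := by
  rintro (i | i) (k | k) h
  all_goals
    have hi := congr_arg (· i) h
    simp only [signedBasisVector, Sum.elim_inl, Sum.elim_inr, PiLp.neg_apply, PiLp.single_apply,
      if_true] at hi
    simp only [Sum.inl.injEq, Sum.inr.injEq, reduceCtorEq]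
  all_goals split_ifs at hi with hik <;> first | exact hik | norm_num at hi

theorem norm_signedBasisVector (s : Fin d ⊕ Fin d) : ‖signedBasisVector d s‖ = 1 := by
  rcases s with i | i <;> simp [signedBasisVector]

end

instance {m n : Type*} [Countable m] [Countable n] :
    MeasurableSingletonClass (Matrix m n ℝ) :=
  inferInstanceAs (MeasurableSingletonClass (m → n → ℝ))

theorem MeasureTheory.ae_mem_of_sum_measure_eq_one {Ω α : Type*} [MeasurableSpace Ω]
    [MeasurableSpace α] [MeasurableSingletonClass α] {P : Measure Ω} [IsProbabilityMeasure P]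
    {X : Ω → α} (hX : Measurable X) (s : Finset α) (h : ∑ a ∈ s, P {ω | X ω = a} = 1) :
    ∀ᵐ ω ∂P, X ω ∈ s := by
  have hs : P (X ⁻¹' s) = 1 :=
    (sum_measure_preimage_singleton s fun a _ => hX (measurableSet_singleton a)).symm.trans h
  exact (ae_mem_iff_measure_eq (hX s.measurableSet).nullMeasurableSet).2 (by simpa using hs)

theorem ProbabilityTheory.condExp_indicator_of_indep {Ω : Type*} {m₁ m₂ mΩ : MeasurableSpace Ω}
    {μ : Measure Ω} [IsFiniteMeasure μ] (hle₁ : m₁ ≤ mΩ) (hle₂ : m₂ ≤ mΩ)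
    (hind : Indep m₁ m₂ μ) {s : Set Ω} (hs : MeasurableSet[m₁] s) {V : Ω → ℝ}
    (hV : StronglyMeasurable[m₂] V) (hVint : Integrable V μ) :
    μ[s.indicator V | m₂] =ᵐ[μ] fun ω => μ.real s * V ω := by
  have hs' : MeasurableSet s := hle₁ s hs
  have hprod : s.indicator V = V * s.indicator (fun _ => 1) := by
    ext ω
    by_cases hω : ω ∈ s <;> simp [hω]
  have hconst : μ[s.indicator (fun _ => 1) | m₂] =ᵐ[μ] fun _ => μ.real s := by
    simpa [integral_indicator_const _ hs'] using
      condExp_indep_eq hle₁ hle₂ (stronglyMeasurable_const (b := (1 : ℝ)).indicator hs) hind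
  rw [hprod]
  filter_upwards [condExp_mul_of_stronglyMeasurable_left hV (hprod ▸ hVint.indicator hs')
    ((integrable_const 1).indicator hs'), hconst] with ω h1 h2
  rw [h1, Pi.mul_apply, h2, mul_comm]

theorem MeasureTheory.Martingale.exists_ae_tendsto_of_nonneg {Ω : Type*}
    {m0 : MeasurableSpace Ω} {μ : Measure Ω} [IsFiniteMeasure μ] {ℱ : Filtration ℕ m0}
    {f : ℕ → Ω → ℝ} (hf : Martingale f ℱ μ) (hnonneg : ∀ n, 0 ≤ᵐ[μ] f n) :
    ∀ᵐ ω ∂μ, ∃ c, Tendsto (fun n => f n ω) atTop (𝓝 c) := by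
  refine hf.submartingale.exists_ae_tendsto_of_bdd (R := (∫ ω, f 0 ω ∂μ).toNNReal) fun n => ?_
  have hint : ∫ ω, f n ω ∂μ = ∫ ω, f 0 ω ∂μ := by
    simpa using (hf.setIntegral_eq (Nat.zero_le n) MeasurableSet.univ).symm
  calc eLpNorm (f n) 1 μ = ∫⁻ ω, ENNReal.ofReal (f n ω) ∂μ := by
        rw [eLpNorm_one_eq_lintegral_enorm]
        exact lintegral_congr_ae ((hnonneg n).mono fun ω hω => Real.enorm_of_nonneg hω)
    _ = ENNReal.ofReal (∫ ω, f 0 ω ∂μ) := by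
        rw [← hint, ofReal_integral_eq_lintegral_ofReal (hf.integrable n) (hnonneg n)]
    _ ≤ _ := le_rfl

namespace MERWStops

theorem aseq_succ (r : ℝ) {n : ℕ} (hn : 1 ≤ n) :
    aseq r (n + 1) = aseq r n * (1 + (1 - r) / n) := by
  obtain ⟨m, rfl⟩ := Nat.exists_eq_add_of_le' hn
  simp [aseq, Finset.prod_Icc_succ_top]

theorem aseq_pos {r : ℝ} (hr : r ≤ 1) (n : ℕ) : 0 < aseq r n :=
  Finset.prod_pos fun k _ => by
    have : 0 ≤ 1 - r := by linarith
    positivity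

theorem aseq_succ_le_exp {r : ℝ} (hr : r ≤ 1) (n : ℕ) :
    aseq r (n + 1) ≤ Real.exp ((1 - r) * (1 + Real.log (n + 1))) := by
  have h1r : 0 ≤ 1 - r := by linarith
  have hharm : (harmonic n : ℝ) ≤ 1 + Real.log (n + 1) := by
    have : Real.log n ≤ Real.log (n + 1) := by
      rcases n.eq_zero_or_pos with rfl | hn
      · simp
      · exact Real.log_le_log (by positivity) (by linarith)
    linarith [harmonic_le_one_add_log n]
  calc aseq r (n + 1) ≤ ∏ k ∈ Finset.Icc 1 n, Real.exp ((1 - r) / k) :=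
        Finset.prod_le_prod (fun k _ => by positivity)
          fun k _ => by linarith [Real.add_one_le_exp ((1 - r) / k)]
    _ = Real.exp ((1 - r) * harmonic n) := by
        rw [← Real.exp_sum, harmonic_eq_sum_Icc]
        push_cast
        simp [Finset.mul_sum, div_eq_mul_inv]
    _ ≤ Real.exp ((1 - r) * (1 + Real.log (n + 1))) :=
        Real.exp_le_exp.2 (mul_le_mul_of_nonneg_left hharm h1r)

theorem tendsto_aseq_half_succ_div :
    Tendsto (fun n : ℕ => aseq (1 / 2) (n + 1) /
      (Real.sqrt (n + 1 : ℕ) * Real.log (n + 1 : ℕ))) atTop (𝓝 0) := by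
  have hlog : Tendsto (fun n : ℕ => Real.exp (1 / 2) / Real.log (n + 1 : ℕ)) atTop (𝓝 0) :=
    tendsto_const_nhds.div_atTop
      (Real.tendsto_log_atTop.comp (tendsto_natCast_atTop_atTop.comp (tendsto_add_atTop_nat 1)))
  refine squeeze_zero' (.of_forall fun n => ?_) ?_ hlog
  · exact div_nonneg (aseq_pos (by norm_num) _).le (by positivity)
  filter_upwards [eventually_ge_atTop 1] with n hn
  have hsqrt : 0 < Real.sqrt (n + 1 : ℕ) := by positivity
  have hlogpos : 0 < Real.log (n + 1 : ℕ) := Real.log_pos (by norm_cast; omega)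
  have hbound : aseq (1 / 2) (n + 1) ≤ Real.exp (1 / 2) * Real.sqrt (n + 1 : ℕ) := by
    refine (aseq_succ_le_exp (by norm_num) n).trans_eq ?_
    have hsplit : (1 - 1 / 2) * (1 + Real.log (n + 1)) = 1 / 2 + Real.log (n + 1) / 2 := by ring
    rw [hsplit, Real.exp_add, Real.exp_half (Real.log _), Real.exp_log (by positivity)]
    push_cast
    rfl
  rw [div_le_div_iff₀ (by positivity) hlogpos]
  nlinarith

variable {Ω : Type*} [MeasurableSpace Ω] {P : Measure Ω} {d : ℕ} {p q r : ℝ}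
  (W : MERWStops P d p q r)

theorem sum_measure_A_eq_stepMatrix {n : ℕ} (hn : 1 ≤ n) :
    ∑ o, P {ω | W.A (n + 1) ω = stepMatrix d o} = 1 := by
  obtain ⟨m, rfl⟩ : ∃ m, d = m + 1 := ⟨d - 1, by have := W.hd; omega⟩
  have hJ (i : Fin m) :
      P {ω | W.A (n + 1) ω = cyclicMatrix (m + 1) ^ ((i : ℕ) + 1)} = .ofReal q :=
    W.hAJ n hn _ (by simp [Nat.succ_le_of_lt i.isLt])
  have hnegJ (i : Fin m) :
      P {ω | W.A (n + 1) ω = -cyclicMatrix (m + 1) ^ ((i : ℕ) + 1)} = .ofReal q :=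
    W.hAnegJ n hn _ (by simp [Nat.succ_le_of_lt i.isLt])
  simp only [Fintype.sum_option, Fintype.sum_sum_type, Fin.sum_univ_succ, stepMatrix,
    Fin.val_zero, pow_zero, Fin.val_succ, hJ, hnegJ, W.hAI n hn, W.hAnegI n hn, W.hAzero n hn,
    Finset.sum_const, Finset.card_univ, Fintype.card_fin, nsmul_eq_mul]
  have hp := W.hp.1
  have hq := W.hq.1
  have hr := W.hr.1
  rw [← ENNReal.ofReal_natCast, ← ENNReal.ofReal_mul (by positivity),
    ← ENNReal.ofReal_add hp (by positivity), ← ENNReal.ofReal_add hq (by positivity),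
    ← ENNReal.ofReal_add (by positivity) (by positivity),
    ← ENNReal.ofReal_add hr (by positivity), ← ENNReal.ofReal_one]
  have hpqr := W.hpqr
  push_cast at hpqr
  congr 1
  linarith

theorem sum_measure_X_one_eq_signedBasisVector :
    ∑ s, P {ω | W.X 1 ω = signedBasisVector d s} = 1 := by
  have hd : (d : ℝ) ≠ 0 := by have := W.hd; positivity
  simp only [Fintype.sum_sum_type, signedBasisVector, Sum.elim_inl, Sum.elim_inr,
    fun i => (W.hX1 i).1, fun i => (W.hX1 i).2, Finset.sum_const, Finset.card_univ,
    Fintype.card_fin, nsmul_eq_mul, ← two_mul, ← mul_assoc]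
  rw [← ENNReal.ofReal_natCast, ← ENNReal.ofReal_ofNat, ← ENNReal.ofReal_mul (by positivity),
    ← ENNReal.ofReal_mul (by positivity)]
  field_simp
  simp

theorem X_succ_eq {n : ℕ} (hn : 1 ≤ n) (ω : Ω) :
    W.X (n + 1) ω = WithLp.toLp 2 (W.A (n + 1) ω *ᵥ (W.X (W.β n ω) ω).ofLp) := by
  ext i
  simp [W.hrec n hn ω i, Matrix.mulVec, dotProduct]

theorem Zstar_nonneg (n : ℕ) (ω : Ω) : 0 ≤ W.Zstar n ω :=
  Finset.sum_nonneg fun _ _ => by positivity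

theorem G_le (n : ℕ) : W.G n ≤ ‹MeasurableSpace Ω› :=
  iSup₂_le fun k _ => (W.measX k).comap_le

theorem G_mono : Monotone W.G :=
  fun _ _ hmn => biSup_mono fun _ hk => Finset.Icc_subset_Icc_right hmn hk

theorem measurable_X_G {k n : ℕ} (hk : k ∈ Finset.Icc 1 n) : Measurable[W.G n] (W.X k) :=
  Measurable.of_comap_le (le_iSup₂ (f := fun k _ => MeasurableSpace.comap (W.X k) _) k hk)

theorem stronglyMeasurable_sq_norm_X {k n : ℕ} (hk : k ∈ Finset.Icc 1 n) :
    StronglyMeasurable[W.G n] (fun ω => ‖W.X k ω‖ ^ 2) :=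
  ((continuous_norm.pow 2).measurable.comp (W.measurable_X_G hk)).stronglyMeasurable

theorem stronglyMeasurable_Zstar (n : ℕ) : StronglyMeasurable[W.G n] (W.Zstar n) :=
  Finset.stronglyMeasurable_fun_sum (m := W.G n) _ fun _ => W.stronglyMeasurable_sq_norm_X

theorem indep_A_sup_β_G {n : ℕ} (hn : 1 ≤ n) :
    Indep (MeasurableSpace.comap (W.A (n + 1)) inferInstance ⊔
      MeasurableSpace.comap (W.β n) inferInstance) (W.G n) P := by
  have h := indep_iSup_of_disjoint (fun i : Fin 3 => by
      fin_cases i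
      exacts [(W.measA _).comap_le, (W.measβ _).comap_le, W.G_le n])
    (W.hindep n hn) (S := {0, 1}) (T := {2}) (by simp)
  simp only [iSup_insert, iSup_singleton] at h
  exact h

def filtrationSucc : Filtration ℕ ‹MeasurableSpace Ω› where
  seq n := W.G (n + 1)
  mono' _ _ h := W.G_mono (Nat.add_le_add_right h 1)
  le' n := W.G_le (n + 1)

/-- `M_n = Z*_{n+1} / a_{n+1}`: the index is shifted by one because `Z*_0 = 0` while `Z*_1 = 1`,
so `Z*_n / a_n` is a martingale only from time `1` on. -/
def normalizedZstar (n : ℕ) (ω : Ω) : ℝ :=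
  (aseq r (n + 1))⁻¹ * W.Zstar (n + 1) ω

variable [IsProbabilityMeasure P]

theorem ae_exists_A_eq_stepMatrix {n : ℕ} (hn : 1 ≤ n) :
    ∀ᵐ ω ∂P, ∃ o, W.A (n + 1) ω = stepMatrix d o := by
  have : NeZero d := ⟨by have := W.hd; omega⟩
  have hsum : ∑ M ∈ Finset.univ.image (stepMatrix d), P {ω | W.A (n + 1) ω = M} = 1 := by
    rw [Finset.sum_image fun o _ o' _ h => stepMatrix_injective h]
    exact W.sum_measure_A_eq_stepMatrix hn
  filter_upwards [ae_mem_of_sum_measure_eq_one (W.measA (n + 1)) _ hsum] with ω hω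
  simpa [eq_comm] using hω

theorem ae_norm_X_one : ∀ᵐ ω ∂P, ‖W.X 1 ω‖ = 1 := by
  have hsum : ∑ v ∈ Finset.univ.image (signedBasisVector d), P {ω | W.X 1 ω = v} = 1 := by
    rw [Finset.sum_image fun s _ s' _ h => signedBasisVector_injective h]
    exact W.sum_measure_X_one_eq_signedBasisVector
  filter_upwards [ae_mem_of_sum_measure_eq_one (W.measX 1) _ hsum] with ω hω
  obtain ⟨s, -, hs⟩ := Finset.mem_image.1 hω
  rw [← hs, norm_signedBasisVector]

theorem ae_β_mem_Icc {n : ℕ} (hn : 1 ≤ n) : ∀ᵐ ω ∂P, W.β n ω ∈ Finset.Icc 1 n := by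
  refine ae_mem_of_sum_measure_eq_one (W.measβ n) _ ?_
  rw [Finset.sum_congr rfl (W.hβ n hn), Finset.sum_const, Nat.card_Icc, Nat.add_sub_cancel,
    nsmul_eq_mul, ← ENNReal.ofReal_natCast, ← ENNReal.ofReal_mul (by positivity),
    mul_one_div_cancel (by positivity), ENNReal.ofReal_one]

theorem ae_norm_X_succ {n : ℕ} (hn : 1 ≤ n) :
    ∀ᵐ ω ∂P, ‖W.X (n + 1) ω‖ = if W.A (n + 1) ω = 0 then 0 else ‖W.X (W.β n ω) ω‖ := by
  have : NeZero d := ⟨by have := W.hd; omega⟩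
  filter_upwards [W.ae_exists_A_eq_stepMatrix hn] with ω ⟨o, ho⟩
  rw [W.X_succ_eq hn, ho]
  rcases o with _ | s
  · simp [stepMatrix]
  · have : stepMatrix d (some s) ≠ 0 := stepMatrix_injective.ne (Option.some_ne_none s)
    rw [if_neg this, norm_stepMatrix_some_mulVec]

theorem ae_norm_X_le_one : ∀ᵐ ω ∂P, ∀ k, 1 ≤ k → ‖W.X k ω‖ ≤ 1 := by
  have hsucc : ∀ᵐ ω ∂P, ∀ n, 1 ≤ n → W.β n ω ∈ Finset.Icc 1 n ∧
      ‖W.X (n + 1) ω‖ = if W.A (n + 1) ω = 0 then 0 else ‖W.X (W.β n ω) ω‖ :=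
    ae_all_iff.2 fun n => eventually_imp_distrib_left.2 fun hn =>
      (W.ae_β_mem_Icc hn).and (W.ae_norm_X_succ hn)
  filter_upwards [W.ae_norm_X_one, hsucc] with ω h1 hsucc k hk
  induction k using Nat.strong_induction_on with
  | _ k ih =>
    obtain rfl | ⟨n, hn, rfl⟩ : k = 1 ∨ ∃ n, 1 ≤ n ∧ k = n + 1 :=
      (eq_or_lt_of_le hk).imp Eq.symm fun h => ⟨k - 1, by omega, by omega⟩
    · exact h1.le
    obtain ⟨hβ, hnorm⟩ := hsucc n hn
    rw [Finset.mem_Icc] at hβ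
    rw [hnorm]
    split_ifs
    · exact zero_le_one
    · exact ih _ (by omega) hβ.1

theorem integrable_sq_norm_X {k : ℕ} (hk : 1 ≤ k) :
    Integrable (fun ω => ‖W.X k ω‖ ^ 2) P := by
  refine .of_bound ((W.measX k).norm.pow_const 2).aestronglyMeasurable 1 ?_
  filter_upwards [W.ae_norm_X_le_one] with ω hω
  rw [norm_pow, norm_norm]
  exact pow_le_one₀ (norm_nonneg _) (hω k hk)

theorem integrable_Zstar (n : ℕ) : Integrable (W.Zstar n) P :=
  integrable_finsetSum _ fun _ hk => W.integrable_sq_norm_X (Finset.mem_Icc.1 hk).1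

theorem measureReal_A_ne_zero_β_eq {n k : ℕ} (hn : 1 ≤ n) (hk : k ∈ Finset.Icc 1 n) :
    P.real {ω | W.A (n + 1) ω ≠ 0 ∧ W.β n ω = k} = (1 - r) / n := by
  have hAβ : Indep (MeasurableSpace.comap (W.A (n + 1)) inferInstance)
      (MeasurableSpace.comap (W.β n) inferInstance) P :=
    (W.hindep n hn).indep (i := 0) (j := 1) (by decide)
  have hA : P.real {ω | W.A (n + 1) ω ≠ 0} = 1 - r := by
    rw [← Set.compl_ofPred, probReal_compl_eq_one_sub (s := {ω | W.A (n + 1) ω = 0})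
      ((W.measA _) (measurableSet_singleton 0)), measureReal_def, W.hAzero n hn,
      ENNReal.toReal_ofReal W.hr.1]
  rw [Set.ofPred_and, measureReal_def, (Indep_iff _ _ _).1 hAβ {ω | W.A (n + 1) ω ≠ 0}
    {ω | W.β n ω = k} ⟨{0}ᶜ, by measurability, rfl⟩ ⟨{k}, measurableSet_singleton k, rfl⟩,
    ENNReal.toReal_mul, ← measureReal_def, hA, W.hβ n hn k hk,
    ENNReal.toReal_ofReal (by positivity), mul_one_div]

theorem sq_norm_X_succ_ae_eq {n : ℕ} (hn : 1 ≤ n) :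
    (fun ω => ‖W.X (n + 1) ω‖ ^ 2) =ᵐ[P] ∑ k ∈ Finset.Icc 1 n,
      {ω | W.A (n + 1) ω ≠ 0 ∧ W.β n ω = k}.indicator (fun ω => ‖W.X k ω‖ ^ 2) := by
  filter_upwards [W.ae_β_mem_Icc hn, W.ae_norm_X_succ hn] with ω hβ hnorm
  rw [Finset.sum_apply, hnorm]
  split_ifs with hA
  · simp [hA]
  · rw [Finset.sum_eq_single_of_mem _ hβ fun k _ hk => by simp [Ne.symm hk]]
    simp [hA]

theorem condExp_sq_norm_X_succ {n : ℕ} (hn : 1 ≤ n) :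
    P[fun ω => ‖W.X (n + 1) ω‖ ^ 2 | W.G n] =ᵐ[P] fun ω => (1 - r) / n * W.Zstar n ω := by
  have hA : MeasurableSet[MeasurableSpace.comap (W.A (n + 1)) inferInstance]
      {ω | W.A (n + 1) ω ≠ 0} := ⟨{0}ᶜ, by measurability, rfl⟩
  have hβ (k : ℕ) : MeasurableSet[MeasurableSpace.comap (W.β n) inferInstance]
      {ω | W.β n ω = k} := ⟨{k}, measurableSet_singleton k, rfl⟩
  have hs (k : ℕ) : MeasurableSet[MeasurableSpace.comap (W.A (n + 1)) inferInstance ⊔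
      MeasurableSpace.comap (W.β n) inferInstance] {ω | W.A (n + 1) ω ≠ 0 ∧ W.β n ω = k} :=
    (le_sup_left (a := MeasurableSpace.comap (W.A (n + 1)) inferInstance) _ hA).inter
      (le_sup_right (b := MeasurableSpace.comap (W.β n) inferInstance) _ (hβ k))
  have hle : MeasurableSpace.comap (W.A (n + 1)) inferInstance ⊔
      MeasurableSpace.comap (W.β n) inferInstance ≤ ‹MeasurableSpace Ω› :=
    sup_le (W.measA _).comap_le (W.measβ _).comap_le
  calc P[fun ω => ‖W.X (n + 1) ω‖ ^ 2 | W.G n]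
      =ᵐ[P] P[∑ k ∈ Finset.Icc 1 n,
        {ω | W.A (n + 1) ω ≠ 0 ∧ W.β n ω = k}.indicator (fun ω => ‖W.X k ω‖ ^ 2) | W.G n] :=
        condExp_congr_ae (W.sq_norm_X_succ_ae_eq hn)
    _ =ᵐ[P] ∑ k ∈ Finset.Icc 1 n,
        P[{ω | W.A (n + 1) ω ≠ 0 ∧ W.β n ω = k}.indicator (fun ω => ‖W.X k ω‖ ^ 2) | W.G n] :=
        condExp_finsetSum (fun k hk =>
          (W.integrable_sq_norm_X (Finset.mem_Icc.1 hk).1).indicator (hle _ (hs k))) _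
    _ =ᵐ[P] ∑ k ∈ Finset.Icc 1 n, fun ω => (1 - r) / n * ‖W.X k ω‖ ^ 2 :=
        eventuallyEq_sum fun k hk => by
          simpa only [W.measureReal_A_ne_zero_β_eq hn hk] using
            condExp_indicator_of_indep hle (W.G_le n) (W.indep_A_sup_β_G hn) (hs k)
              (W.stronglyMeasurable_sq_norm_X hk)
              (W.integrable_sq_norm_X (Finset.mem_Icc.1 hk).1)
    _ = fun ω => (1 - r) / n * W.Zstar n ω := by
        ext ω
        simp [Zstar, Finset.mul_sum]

theorem condExp_Zstar_succ {n : ℕ} (hn : 1 ≤ n) :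
    P[W.Zstar (n + 1) | W.G n] =ᵐ[P] fun ω => (1 + (1 - r) / n) * W.Zstar n ω := by
  have hsplit : W.Zstar (n + 1) = W.Zstar n + fun ω => ‖W.X (n + 1) ω‖ ^ 2 := by
    ext ω
    simp [Zstar, Finset.sum_Icc_succ_top (Nat.le_add_left 1 n)]
  rw [hsplit]
  filter_upwards [condExp_add (m := W.G n) (W.integrable_Zstar n)
    (W.integrable_sq_norm_X (Nat.le_add_left 1 n)), W.condExp_sq_norm_X_succ hn] with ω h1 h2
  rw [h1, Pi.add_apply, h2, condExp_of_stronglyMeasurable (W.G_le n) (W.stronglyMeasurable_Zstar n)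
    (W.integrable_Zstar n)]
  ring

theorem martingale_normalizedZstar : Martingale W.normalizedZstar W.filtrationSucc P := by
  refine martingale_nat (fun n => (W.stronglyMeasurable_Zstar (n + 1)).const_mul _)
    (fun n => (W.integrable_Zstar _).const_mul _) fun n => ?_
  have ha : aseq r (n + 2) = aseq r (n + 1) * (1 + (1 - r) / ((n + 1 : ℕ) : ℝ)) :=
    aseq_succ r (Nat.le_add_left 1 n)
  have hfactor : 0 < 1 + (1 - r) / ((n + 1 : ℕ) : ℝ) := by
    have : 0 ≤ 1 - r := by linarith [W.hr.2]
    positivity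
  filter_upwards [condExp_smul (μ := P) (aseq r (n + 2))⁻¹ (W.Zstar (n + 2)) (W.G (n + 1)),
    W.condExp_Zstar_succ (Nat.le_add_left 1 n)] with ω h1 h2
  change _ = P[(aseq r (n + 2))⁻¹ • W.Zstar (n + 2) | W.G (n + 1)] ω
  rw [h1, Pi.smul_apply, h2, ha, normalizedZstar, smul_eq_mul, mul_inv, mul_assoc,
    inv_mul_cancel_left₀ hfactor.ne']

theorem ae_exists_tendsto_normalizedZstar :
    ∀ᵐ ω ∂P, ∃ c, Tendsto (fun n => W.normalizedZstar n ω) atTop (𝓝 c) :=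
  W.martingale_normalizedZstar.exists_ae_tendsto_of_nonneg fun _ => .of_forall fun ω =>
    mul_nonneg (inv_nonneg.2 (aseq_pos W.hr.2 _).le) (W.Zstar_nonneg _ ω)

end MERWStops

/-- In the MERW with stops, if `r = 1/2`, then `Z_n*/(√n log n) → 0` a.s. -/
theorem merwStops_lln_of_r_eq_half
    {Ω : Type*} [MeasurableSpace Ω] {P : Measure Ω} [IsProbabilityMeasure P]
    {d : ℕ} {p q r : ℝ} (W : MERWStops P d p q r) (hr : r = 1 / 2) :
    ∀ᵐ ω ∂P, Tendsto (fun n : ℕ => W.Zstar n ω / (Real.sqrt n * Real.log n))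
      atTop (nhds 0) := by
  subst hr
  filter_upwards [W.ae_exists_tendsto_normalizedZstar] with ω ⟨c, hc⟩
  rw [← tendsto_add_atTop_iff_nat 1]
  have hZ (n : ℕ) : W.Zstar (n + 1) ω / (Real.sqrt (n + 1 : ℕ) * Real.log (n + 1 : ℕ)) =
      W.normalizedZstar n ω *
        (MERWStops.aseq (1 / 2) (n + 1) / (Real.sqrt (n + 1 : ℕ) * Real.log (n + 1 : ℕ))) := by
    rw [MERWStops.normalizedZstar, inv_mul_eq_div, div_mul_div_cancel₀
      (MERWStops.aseq_pos (by norm_num) _).ne']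
  simpa only [hZ, mul_zero] using hc.mul MERWStops.tendsto_aseq_half_succ_div
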